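/- For an infinite cardinal α, the space (S^α)_1, defined as the set {0,1}^α equipped with the join (supremum) of the product topology from S^α and the cofinite topology, is an α-sequential T1 space. -/

import Mathlib

open Filter Topology

universe u

/-- The two points of the Sierpiński space. -/
inductive SPt : Type
  | zero
  | one
deriving DecidableEq

/-- The Sierpiński topology: `{zero}` is open, `{one}` is not. -/
instance : TopologicalSpace SPt := TopologicalSpace.generateFrom {{SPt.zero}}

/-- `A` is closed under limits of `o`-indexed transfinite sequences for all infinite
ordinals `o ≤ β` (β an infinite cardinal, viewed as an ordinal). -/
def OrdSeqClosed {X : Type u} [TopologicalSpace X] (β : Cardinal.{u}) (A : Set X) : Prop :=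
  ∀ o : Ordinal.{u}, Ordinal.omega0 ≤ o → o ≤ β.ord →
    ∀ f : o.ToType → X, (∀ i, f i ∈ A) →
    ∀ x : X, Filter.Tendsto f Filter.atTop (nhds x) → x ∈ A

/-- A space is β-sequential if every such subset is closed. -/
def IsBetaSequential (X : Type u) [TopologicalSpace X] (β : Cardinal.{u}) : Prop :=
  ∀ A : Set X, OrdSeqClosed β A → IsClosed A

/-- `A` contains limits of all convergent transfinite sequences of its points. -/
def TransSeqClosed {X : Type u} [TopologicalSpace X] (A : Set X) : Prop :=
  ∀ o : Ordinal.{u}, Ordinal.omega0 ≤ o →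
    ∀ f : o.ToType → X, (∀ i, f i ∈ A) →
    ∀ x : X, Filter.Tendsto f Filter.atTop (nhds x) → x ∈ A

/-- Pseudoradial space. -/
def IsPseudoradial (X : Type u) [TopologicalSpace X] : Prop :=
  ∀ A : Set X, TransSeqClosed A → IsClosed A

/-- The cofinite topology on a type. -/
def cofiniteTopology (Y : Type u) : TopologicalSpace Y :=
  @TopologicalSpace.cofinite Y

/-!
A point of the join-closure of `A` outside `A` is a cluster point of `𝓟 A ⊓ cofinite` in the
product topology: each of its product neighbourhoods meets `A` infinitely often. An injective
transfinite sequence converging in the product topology converges in the join, as it eventually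
avoids every point. Such a cluster point `x` of an `α`-sequentially closed `A` lies in `A`, by
induction on the size of its zero set `Z`. If `Z` is finite, the points vanishing on `Z` form a
product neighbourhood of `x`, so infinitely many of them lie in `A`, and an injective `ω`-sequence
of them converges to `x`. If `Z` is infinite of size `c`, enumerate it along `c.ord` and let `x_j`
vanish exactly on the elements enumerated before `j`: `x` specializes to `x_j`, so `x_j` is again
such a cluster point, with a smaller zero set, hence in `A`; and the injective `c.ord`-sequence
`(x_j)` converges to `x`.
-/

open Set Cardinal Function

namespace SPt

lemma isOpen_singleton_zero : IsOpen ({zero} : Set SPt) :=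
  TopologicalSpace.isOpen_generateFrom_of_mem rfl

lemma nhds_zero : 𝓝 zero = pure zero :=
  isOpen_singleton_iff_nhds_eq_pure _ |>.1 isOpen_singleton_zero

lemma nhds_one : 𝓝 one = ⊤ := by
  refine TopologicalSpace.nhds_generateFrom.trans (iInf₂_eq_top.2 ?_)
  rintro _ ⟨h, rfl⟩
  cases h

lemma specializes_one (a : SPt) : a ⤳ one := by
  simp [Specializes, nhds_one]

end SPt

section CofiniteJoin

variable {X : Type*} {t : TopologicalSpace X} {x : X} {A : Set X}

lemma nhds_cofiniteTopology : @nhds X (cofiniteTopology X) x = pure x ⊔ cofinite := by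
  let := cofiniteTopology X
  ext U
  rw [mem_nhds_iff]
  constructor
  · rintro ⟨V, hVU, hV, hxV⟩
    exact mem_sup.2 ⟨hVU hxV, mem_of_superset (hV ⟨x, hxV⟩) hVU⟩
  · rintro ⟨hxU : x ∈ U, hU : Uᶜ.Finite⟩
    exact ⟨U, Subset.rfl, fun _ => hU, hxU⟩

lemma t1Space_cofiniteTopology : @T1Space X (cofiniteTopology X) :=
  @T1Space.mk X (cofiniteTopology X) fun x =>
    @IsClosed.mk X (cofiniteTopology X) _ fun _ => by simp

lemma nhds_inf_cofiniteTopology :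
    @nhds X (t ⊓ cofiniteTopology X) x = @nhds X t x ⊓ (pure x ⊔ cofinite) := by
  rw [nhds_inf, nhds_cofiniteTopology]

lemma tendsto_nhds_inf_cofiniteTopology {ι : Type*} {l : Filter ι} {f : ι → X}
    (hf : Tendsto f l (@nhds X t x)) (hcof : Tendsto f l cofinite) :
    Tendsto f l (@nhds X (t ⊓ cofiniteTopology X) x) := by
  rw [nhds_inf_cofiniteTopology]
  exact tendsto_inf.2 ⟨hf, hcof.mono_right le_sup_right⟩

lemma clusterPt_principal_inf_cofinite_of_mem_closure
    (hx : x ∈ @closure X (t ⊓ cofiniteTopology X) A) (hxA : x ∉ A) :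
    @ClusterPt X t x (𝓟 A ⊓ cofinite) := by
  have hne : (@nhds X (t ⊓ cofiniteTopology X) x ⊓ 𝓟 A).NeBot :=
    (@mem_closure_iff_clusterPt X (t ⊓ cofiniteTopology X) _ _).1 hx
  rw [nhds_inf_cofiniteTopology, inf_sup_left, inf_sup_right, sup_neBot] at hne
  have hpure : @nhds X t x ⊓ pure x ⊓ 𝓟 A = ⊥ :=
    eq_bot_mono (inf_le_inf_right _ inf_le_right) (inf_principal_eq_bot.2 (mem_pure.2 hxA))
  rw [hpure] at hne
  show (@nhds X t x ⊓ (𝓟 A ⊓ cofinite)).NeBot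
  rw [← inf_assoc, inf_right_comm]
  exact hne.resolve_left fun h => h.ne rfl

lemma ClusterPt.principal_inf_cofinite_infinite [TopologicalSpace X]
    (hx : ClusterPt x (𝓟 A ⊓ cofinite)) {V : Set X} (hV : V ∈ 𝓝 x) : (V ∩ A).Infinite := by
  intro hfin
  refine hx.ne (empty_mem_iff_bot.1 ?_)
  have : V ∩ (A ∩ (V ∩ A)ᶜ) ∈ 𝓝 x ⊓ (𝓟 A ⊓ cofinite) :=
    inter_mem_inf hV (inter_mem_inf (mem_principal_self A) hfin.compl_mem_cofinite)
  exact mem_of_superset this fun y ⟨hV, hA, hVA⟩ => hVA ⟨hV, hA⟩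

end CofiniteJoin

lemma OrdSeqClosed.mem_of_injective_tendsto {X : Type u} {t : TopologicalSpace X}
    {α c : Cardinal.{u}} {A : Set X} (hA : @OrdSeqClosed X (t ⊓ cofiniteTopology X) α A)
    (hc : ℵ₀ ≤ c) (hcα : c ≤ α) {f : c.ord.ToType → X} (hf : Injective f) (hfA : ∀ i, f i ∈ A)
    {x : X} (hfx : Tendsto f atTop (@nhds X t x)) : x ∈ A := by
  have := Cardinal.noMaxOrder hc
  refine hA c.ord (ord_aleph0 ▸ ord_le_ord.2 hc) (ord_le_ord.2 hcα) f hfA x ?_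
  exact tendsto_nhds_inf_cofiniteTopology hfx (hf.tendsto_cofinite.mono_left atTop_le_cofinite)

section ZeroSet

variable {J : Type*}

def zeroSet (x : J → SPt) : Set J := {i | x i = SPt.zero}

open Classical in
noncomputable def zeroOn (s : Set J) : J → SPt := fun i => if i ∈ s then SPt.zero else SPt.one

lemma zeroSet_zeroOn (s : Set J) : zeroSet (zeroOn s) = s := by
  ext i
  by_cases hi : i ∈ s <;> simp [zeroSet, zeroOn, hi]

lemma zeroOn_injective : Injective (zeroOn : Set J → J → SPt) := fun s s' h => by
  rw [← zeroSet_zeroOn s, h, zeroSet_zeroOn]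

lemma specializes_of_zeroSet_subset {x y : J → SPt} (h : zeroSet y ⊆ zeroSet x) : x ⤳ y :=
  specializes_pi.2 fun i => by
    cases hy : y i with
    | zero => rw [h hy]
    | one => exact SPt.specializes_one _

lemma tendsto_nhds_of_eventually_zero {ι : Type*} {l : Filter ι} {f : ι → J → SPt}
    {x : J → SPt} (h : ∀ i ∈ zeroSet x, ∀ᶠ j in l, f j i = SPt.zero) : Tendsto f l (𝓝 x) :=
  tendsto_pi_nhds.2 fun i => by
    cases hx : x i with
    | zero => rw [SPt.nhds_zero, tendsto_pure]; exact h i hx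
    | one => rw [SPt.nhds_one]; exact le_top

lemma setOf_zeroSet_subset_mem_nhds {x : J → SPt} (hx : (zeroSet x).Finite) :
    {y | zeroSet x ⊆ zeroSet y} ∈ 𝓝 x :=
  (isOpen_set_pi hx fun _ _ => SPt.isOpen_singleton_zero).mem_nhds fun _ hi => hi

end ZeroSet

section SierpinskiPower

variable {J : Type u} {α : Cardinal.{u}} {A : Set (J → SPt)}

lemma mem_of_clusterPt_of_finite_zeroSet (hα : ℵ₀ ≤ α)
    (hA : @OrdSeqClosed _ (Pi.topologicalSpace ⊓ cofiniteTopology _) α A) {x : J → SPt}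
    (hx : ClusterPt x (𝓟 A ⊓ cofinite)) (hfin : (zeroSet x).Finite) : x ∈ A := by
  set B := {y | zeroSet x ⊆ zeroSet y} ∩ A
  have hB : B.Infinite := hx.principal_inf_cofinite_infinite (setOf_zeroSet_subset_mem_nhds hfin)
  obtain ⟨e⟩ : Nonempty ((ℵ₀ : Cardinal.{u}).ord.ToType ↪ B) := by
    rw [← Cardinal.le_def, mk_ord_toType]
    exact Cardinal.infinite_iff.1 hB.to_subtype
  refine hA.mem_of_injective_tendsto le_rfl hα (f := fun i => (e i : J → SPt))
    (Subtype.val_injective.comp e.injective) (fun i => (e i).2.2) ?_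
  exact tendsto_nhds_of_eventually_zero fun i hi => .of_forall fun j => (e j).2.1 hi

lemma mem_of_clusterPt_of_infinite_zeroSet (hJ : #J ≤ α)
    (hA : @OrdSeqClosed _ (Pi.topologicalSpace ⊓ cofiniteTopology _) α A) {x : J → SPt}
    (hinf : (zeroSet x).Infinite)
    (ih : ∀ y, #(zeroSet y) < #(zeroSet x) → ClusterPt y (𝓟 A ⊓ cofinite) → y ∈ A)
    (hx : ClusterPt x (𝓟 A ⊓ cofinite)) : x ∈ A := by
  set c := #(zeroSet x)
  have hc : ℵ₀ ≤ c := Cardinal.infinite_iff.1 hinf.to_subtype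
  have := Cardinal.noMaxOrder hc
  obtain ⟨e⟩ : Nonempty (c.ord.ToType ≃ zeroSet x) := Cardinal.eq.1 (mk_ord_toType c)
  set g : c.ord.ToType → J := fun j => e j
  have hg : Injective g := Subtype.val_injective.comp e.injective
  set f : c.ord.ToType → J → SPt := fun j => zeroOn (g '' Iio j)
  have hfA : ∀ j, f j ∈ A := by
    intro j
    refine ih _ ?_ ((specializes_of_zeroSet_subset ?_).clusterPt hx)
    · rw [zeroSet_zeroOn]
      exact mk_image_le.trans_lt (by simpa using mk_Iio_lt j)
    · rw [zeroSet_zeroOn]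
      rintro _ ⟨k, -, rfl⟩
      exact (e k).2
  refine hA.mem_of_injective_tendsto hc ((mk_set_le _).trans hJ)
    (zeroOn_injective.comp ((image_injective.2 hg).comp Iio_injective)) hfA
    (tendsto_nhds_of_eventually_zero fun i hi => ?_)
  filter_upwards [eventually_gt_atTop (e.symm ⟨i, hi⟩)] with j hj
  show i ∈ zeroSet (f j)
  rw [zeroSet_zeroOn]
  exact ⟨_, hj, by simp [g]⟩

theorem mem_of_clusterPt_of_ordSeqClosed (hα : ℵ₀ ≤ α) (hJ : #J ≤ α)
    (hA : @OrdSeqClosed _ (Pi.topologicalSpace ⊓ cofiniteTopology _) α A) (x : J → SPt)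
    (hx : ClusterPt x (𝓟 A ⊓ cofinite)) : x ∈ A := by
  induction x using (wellFounded_lt.onFun (f := fun x : J → SPt => #(zeroSet x))).induction with
  | _ x ih =>
    rcases (zeroSet x).finite_or_infinite with hfin | hinf
    · exact mem_of_clusterPt_of_finite_zeroSet hα hA hx hfin
    · exact mem_of_clusterPt_of_infinite_zeroSet hJ hA hinf ih hx

end SierpinskiPower

/-- The join of two topologies is their `⊓` in Mathlib's order on `TopologicalSpace`. -/
theorem sierpinski_power_one_alpha_sequential_t1 (α : Cardinal.{u})
    (hα : Cardinal.aleph0 ≤ α) :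
    @IsBetaSequential (α.ord.ToType → SPt)
      (Pi.topologicalSpace ⊓ cofiniteTopology (α.ord.ToType → SPt)) α ∧
    @T1Space (α.ord.ToType → SPt)
      (Pi.topologicalSpace ⊓ cofiniteTopology (α.ord.ToType → SPt)) := by
  refine ⟨fun A hA => ?_, t1Space_antitone inf_le_right t1Space_cofiniteTopology⟩
  refine @isClosed_of_closure_subset _ (Pi.topologicalSpace ⊓ cofiniteTopology _) _ fun x hx => ?_
  by_contra hxA
  exact hxA <| mem_of_clusterPt_of_ordSeqClosed hα (mk_ord_toType α).le hA x
    (clusterPt_principal_inf_cofinite_of_mem_closure hx hxA)
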